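/- Let q = 2 and let m ≥ 3 be odd. The code W([m/2],2) in H(m,2), consisting of all binary m-tuples of weight (m+1)/2 or (m−1)/2, is neighbour transitive, has automorphism group Aut(W([m/2],2)) = Diag_m(S_2) ⋊ L, and has minimum distance δ = 1. -/

import Mathlib

open Equiv Pointwise

section HammingDefs

variable {I : Type*} [Fintype I] [DecidableEq I] {q : ℕ}

/-- The permutation of the vertex set of the Hamming graph `H(I,q)` induced by the
letter permutations `g i` (acting coordinatewise) followed by the coordinate
permutation `σ`:  `(α^x)_i = g_{σ⁻¹ i} (α_{σ⁻¹ i})`. -/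
def tvp (g : I → Equiv.Perm (Fin q)) (σ : Equiv.Perm I) : Equiv.Perm (I → Fin q) where
  toFun α i := g (σ⁻¹ i) (α (σ⁻¹ i))
  invFun β i := (g i)⁻¹ (β (σ i))
  left_inv α := by funext i; simp
  right_inv β := by funext i; simp

/-- The automorphism group of the Hamming graph `H(I,q)`: all permutations of the
vertex set preserving adjacency (Hamming distance 1). -/
def autH (I : Type*) [Fintype I] [DecidableEq I] (q : ℕ) :
    Subgroup (Equiv.Perm (I → Fin q)) where
  carrier := {y | ∀ α β : I → Fin q, hammingDist (y α) (y β) = 1 ↔ hammingDist α β = 1}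
  one_mem' := by intro α β; simp
  mul_mem' := by
    intro a b ha hb α β
    rw [Equiv.Perm.mul_apply, Equiv.Perm.mul_apply, ha, hb]
  inv_mem' := by
    intro a ha α β
    simpa using (ha (a⁻¹ α) (a⁻¹ β)).symm

/-- The homomorphism `S_q × S_I → Sym(V(H(I,q)))` whose image is `Diag(S_q) ⋊ L`. -/
def diagLHom (I : Type*) [Fintype I] [DecidableEq I] (q : ℕ) :
    Equiv.Perm (Fin q) × Equiv.Perm I →* Equiv.Perm (I → Fin q) where
  toFun x := tvp (fun _ => x.1) x.2
  map_one' := by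
    ext α i
    simp [tvp]
  map_mul' x y := by
    ext α i
    simp [tvp, mul_inv_rev]

/-- The subgroup `Diag_I(S_q) ⋊ L` of the automorphism group of `H(I,q)`. -/
def diagL (I : Type*) [Fintype I] [DecidableEq I] (q : ℕ) :
    Subgroup (Equiv.Perm (I → Fin q)) :=
  (diagLHom I q).range

/-- The subgroup `L` of pure coordinate permutations of `H(I,q)`. -/
def permL (I : Type*) [Fintype I] [DecidableEq I] (q : ℕ) :
    Subgroup (Equiv.Perm (I → Fin q)) :=
  ((diagLHom I q).comp (MonoidHom.inr (Equiv.Perm (Fin q)) (Equiv.Perm I))).range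

/-- Distance from a vertex to a code. -/
noncomputable def distC (γ : I → Fin q) (C : Set (I → Fin q)) : ℕ :=
  sInf {d | ∃ β ∈ C, hammingDist γ β = d}

/-- The cell `C_i` of the distance partition of the code `C`. -/
def cell (C : Set (I → Fin q)) (i : ℕ) : Set (I → Fin q) :=
  {γ | distC γ C = i}

/-- The covering radius of the code `C`. -/
noncomputable def covRad (C : Set (I → Fin q)) : ℕ :=
  sSup {d | ∃ γ : I → Fin q, distC γ C = d}

/-- The minimum distance of the code `C`. -/
noncomputable def minDist (C : Set (I → Fin q)) : ℕ :=
  sInf {d | ∃ β ∈ C, ∃ γ ∈ C, β ≠ γ ∧ hammingDist β γ = d}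

/-- `S` is an orbit of the subgroup `X` of permutations of the vertex set. -/
def IsOrbitOf (X : Subgroup (Equiv.Perm (I → Fin q))) (S : Set (I → Fin q)) : Prop :=
  ∃ v, S = {w | ∃ x ∈ X, x v = w}

/-- `C` is `X`-neighbour transitive: `X` is a group of automorphisms of the Hamming
graph, and both `C` and its set of neighbours `C_1` are `X`-orbits. -/
def NbrTransitive (X : Subgroup (Equiv.Perm (I → Fin q))) (C : Set (I → Fin q)) : Prop :=
  X ≤ autH I q ∧ IsOrbitOf X C ∧ IsOrbitOf X (cell C 1)

/-- `C` is `X`-completely transitive: every cell of the distance partition is an `X`-orbit. -/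
def ComplTransitive (X : Subgroup (Equiv.Perm (I → Fin q))) (C : Set (I → Fin q)) : Prop :=
  X ≤ autH I q ∧ ∀ i ≤ covRad C, IsOrbitOf X (cell C i)

/-- `C` is diagonally `X`-neighbour transitive. -/
def DiagNbrTransitive (X : Subgroup (Equiv.Perm (I → Fin q))) (C : Set (I → Fin q)) : Prop :=
  NbrTransitive X C ∧ X ≤ diagL I q

/-- The automorphism group of the code `C`: the setwise stabiliser of `C` in the
automorphism group of the Hamming graph. -/
def autCode (C : Set (I → Fin q)) : Subgroup (Equiv.Perm (I → Fin q)) :=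
  autH I q ⊓ MulAction.stabilizer (Equiv.Perm (I → Fin q)) C

/-- Number of occurrences of the letter `a` in the vertex `α`. -/
def cnt (α : I → Fin q) (a : Fin q) : ℕ :=
  (Finset.univ.filter fun i => α i = a).card

/-- The composition `Q(α)` of a vertex: the set of pairs `(a, p)` such that the letter `a`
occurs exactly `p > 0` times in `α`. -/
def compOf (α : I → Fin q) : Set (Fin q × ℕ) :=
  {x | 0 < x.2 ∧ cnt α x.1 = x.2}

/-- `Num(α)`: the set of pairs `(p, s)` such that exactly `s > 0` distinct letters occur
exactly `p > 0` times in `α`. -/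
def numOf (α : I → Fin q) : Set (ℕ × ℕ) :=
  {x | 0 < x.1 ∧ 0 < x.2 ∧ (Finset.univ.filter fun a => cnt α a = x.1).card = x.2}

/-- The repetition code `Rep(I,q)`. -/
def repCode (I : Type*) [Fintype I] [DecidableEq I] (q : ℕ) : Set (I → Fin q) :=
  {α | ∃ a, α = fun _ => a}

/-- The injection code `Inj(I,q)`: all tuples with pairwise distinct entries. -/
def injCode (I : Type*) [Fintype I] [DecidableEq I] (q : ℕ) : Set (I → Fin q) :=
  {α | Function.Injective α}

/-- The code `All(pq,q)`: all vertices in which every letter occurs exactly `p` times. -/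
def allCode (I : Type*) [Fintype I] [DecidableEq I] (q p : ℕ) : Set (I → Fin q) :=
  {α | ∀ a, cnt α a = p}

/-- `C` is `s`-regular. -/
def RegularUpTo (C : Set (I → Fin q)) (s : ℕ) : Prop :=
  ∀ i ≤ s, ∀ γ ∈ cell C i, ∀ γ' ∈ cell C i, ∀ k : ℕ,
    {β ∈ C | hammingDist γ β = k}.ncard = {β ∈ C | hammingDist γ' β = k}.ncard

/-- `C` is completely regular. -/
def ComplRegular (C : Set (I → Fin q)) : Prop :=
  RegularUpTo C (covRad C)

/-- `C` is a constant composition code: every letter occurs the same positive number of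
times in every codeword. -/
def IsCCC (C : Set (I → Fin q)) : Prop :=
  C.Nonempty ∧ ∃ f : Fin q → ℕ, (∀ a, 0 < f a) ∧ ∀ β ∈ C, ∀ a, cnt β a = f a

end HammingDefs

section Weight

/-- The weight of a binary vertex: number of nonzero entries. -/
def wt {m : ℕ} (α : Fin m → Fin 2) : ℕ :=
  (Finset.univ.filter fun i => α i ≠ 0).card

/-- The code `W([m/2],2)`: binary `m`-tuples of weight `(m+1)/2` or `(m-1)/2`. -/
def wCode (m : ℕ) : Set (Fin m → Fin 2) :=
  {α | wt α = (m+1)/2 ∨ wt α = (m-1)/2}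

/-- The code `W([m/2],2)` over a general alphabet (used when `q = 2`): vertices in which
one letter occurs `(m+1)/2` times and another `(m-1)/2` times. -/
def wCodeGen (m q : ℕ) : Set (Fin m → Fin q) :=
  {α | ∃ a b : Fin q, a ≠ b ∧ cnt α a = (m+1)/2 ∧ cnt α b = (m-1)/2}

end Weight

section PermCodes

/-- The vertex `α(g) = (1^g, …, q^g)` of `H(q,q)` associated with a permutation `g`. -/
def alphaVtx {q : ℕ} (g : Equiv.Perm (Fin q)) : Fin q → Fin q := fun i => g i

/-- The permutation code generated by a set `T` of permutations. -/
def permCode {q : ℕ} (T : Set (Equiv.Perm (Fin q))) : Set (Fin q → Fin q) :=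
  alphaVtx '' T

end PermCodes

section Repetition

variable {I : Type*} [Fintype I] [DecidableEq I] {q : ℕ}

/-- The `p`-fold repetition `rep_p(α) = (α,…,α)`, a vertex of `H(p·|I|, q)`. -/
def repv (p : ℕ) (α : I → Fin q) : Fin p × I → Fin q := fun ji => α ji.2

/-- The `p`-fold repetition code `Rep_p(C)`. -/
def repCodeP (p : ℕ) (C : Set (I → Fin q)) : Set (Fin p × I → Fin q) :=
  repv p '' C

/-- The homomorphism `Sym(V(H(I,q))) × S_p → Sym(V(H(p·|I|,q)))`: the pair `(x,σ)` acts on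
`p`-tuples of vertices by `(α_1,…,α_p) ↦ (α_{σ⁻¹(1)}^x, …, α_{σ⁻¹(p)}^x)`. -/
def repHom (p : ℕ) (I : Type*) [Fintype I] [DecidableEq I] (q : ℕ) :
    Equiv.Perm (I → Fin q) × Equiv.Perm (Fin p) →* Equiv.Perm (Fin p × I → Fin q) where
  toFun x :=
    { toFun := fun β ji => x.1 (fun i => β (x.2⁻¹ ji.1, i)) ji.2
      invFun := fun β ji => x.1⁻¹ (fun i => β (x.2 ji.1, i)) ji.2
      left_inv := by intro β; funext ji; simp
      right_inv := by intro β; funext ji; simp }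
  map_one' := by ext β ji; simp
  map_mul' x y := by ext β ji; simp [mul_inv_rev]


/-! Every automorphism of `H(m,2)` is a coordinate permutation composed with coordinatewise
letter permutations: after a translation fixing `0` it preserves weights and the distances to the
weight-one vertices `eᵢ`, and `αᵢ ≠ 0` exactly when `d(α, eᵢ) < wt α`, which pins down every
coordinate. The group `Diag_m(S_2) ⋊ L` preserves or complements weights and `L` is transitive
on each weight layer, so its orbits are the unions of the layers of weights `w` and `m - w`; `W`
is the union of the layers `(m ± 1)/2`, and `C_1` that of the layers `(m ± 3)/2`. An
automorphism whose letter permutations are not all equal flips two coordinates of some codeword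
in the same direction, changing its weight by two and leaving the code. -/

open Finset Function

lemma Nat.sInf_eq_one_iff {S : Set ℕ} : sInf S = 1 ↔ 1 ∈ S ∧ 0 ∉ S := by
  constructor
  · intro h
    have hS : S.Nonempty := Set.nonempty_iff_ne_empty.2 fun he => by simp [he] at h
    exact ⟨h ▸ Nat.sInf_mem hS, fun h0 => by simpa [h] using Nat.sInf_le h0⟩
  · rintro ⟨h1, h0⟩
    refine le_antisymm (Nat.sInf_le h1) (Nat.one_le_iff_ne_zero.2 fun h => ?_)
    rcases Nat.sInf_eq_zero.1 h with h | h
    · exact h0 h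
    · simp [h] at h1

lemma fin_two_eq_of_ne_zero_iff {a b : Fin 2} (h : a ≠ 0 ↔ b ≠ 0) : a = b := by
  fin_cases a <;> fin_cases b <;> simp_all

lemma perm_fin_two (g : Perm (Fin 2)) : g = 1 ∨ g = swap 0 1 := by
  revert g; decide

section Hamming

variable {I : Type*} [Fintype I] {β : Type*} [DecidableEq β]

lemma hammingDist_comp_perm (e : Perm I) (x y : I → β) :
    hammingDist (fun i => x (e i)) (fun i => y (e i)) = hammingDist x y := by
  simp only [hammingDist, card_filter]
  exact Equiv.sum_comp e fun i => if x i ≠ y i then 1 else 0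

lemma hammingNorm_comp_perm [Zero β] (e : Perm I) (x : I → β) :
    hammingNorm (fun i => x (e i)) = hammingNorm x := by
  simp only [hammingNorm, card_filter]
  exact Equiv.sum_comp e fun i => if x i ≠ 0 then 1 else 0

variable [DecidableEq I]

lemma hammingDist_update_self {x : I → β} {i : I} {c : β} (h : x i ≠ c) :
    hammingDist x (update x i c) = 1 :=
  card_eq_one.2 ⟨i, by ext j; by_cases hj : j = i <;> simp [hj, h]⟩

lemma hammingDist_update_lt {x y : I → β} {i : I} (h : x i ≠ y i) :
    hammingDist (update x i (y i)) y < hammingDist x y := by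
  refine card_lt_card ((ssubset_iff_of_subset fun j => ?_).2 ⟨i, by simpa using h, by simp⟩)
  by_cases hj : j = i <;> simp [hj]

lemma hammingNorm_update_add [Zero β] (x : I → β) (i : I) (c : β) :
    hammingNorm (update x i c) + (if x i ≠ 0 then 1 else 0) =
      hammingNorm x + (if c ≠ 0 then 1 else 0) := by
  simp only [hammingNorm, card_filter, ← add_sum_erase _ _ (mem_univ i), update_self]
  have : ∑ j ∈ univ.erase i, (if update x i c j ≠ 0 then 1 else 0) =
      ∑ j ∈ univ.erase i, (if x j ≠ 0 then 1 else 0) :=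
    sum_congr rfl fun j hj => by rw [update_of_ne (ne_of_mem_erase hj)]
  omega

lemma exists_eq_update_of_hammingDist_eq_one {x y : I → β} (h : hammingDist x y = 1) :
    ∃ i, x i ≠ y i ∧ y = update x i (y i) := by
  obtain ⟨i, hi⟩ := card_eq_one.1 h
  have hmem : ∀ j, x j ≠ y j ↔ j = i := fun j => by simpa using congrArg (j ∈ ·) hi
  refine ⟨i, (hmem i).2 rfl, funext fun j => ?_⟩
  by_cases hj : j = i
  · simp [hj]
  · simp [hj, not_not.1 ((not_congr (hmem j)).2 hj)]

end Hamming

section Automorphisms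

variable {I : Type*} {q : ℕ}

lemma tvp_mul_tvp (g h : I → Perm (Fin q)) (σ τ : Perm I) :
    tvp g σ * tvp h τ = tvp (fun i => g (τ i) * h i) (σ * τ) := by
  ext α i
  simp [tvp, mul_inv_rev]

variable [Fintype I]

lemma hammingDist_tvp (g : I → Perm (Fin q)) (σ : Perm I) (α β : I → Fin q) :
    hammingDist (tvp g σ α) (tvp g σ β) = hammingDist α β :=
  (hammingDist_comp_perm σ⁻¹ (fun i => g i (α i)) fun i => g i (β i)).trans
    (hammingDist_comp _ fun i => (g i).injective)

variable [DecidableEq I]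

lemma tvp_mem_autH (g : I → Perm (Fin q)) (σ : Perm I) : tvp g σ ∈ autH I q :=
  fun α β => by rw [hammingDist_tvp]

lemma diagL_le_autH : diagL I q ≤ autH I q := by
  rintro _ ⟨x, rfl⟩
  exact tvp_mem_autH (fun _ => x.1) x.2

lemma hammingDist_apply_le_of_mem_autH {y : Perm (I → Fin q)} (hy : y ∈ autH I q)
    (α β : I → Fin q) : hammingDist (y α) (y β) ≤ hammingDist α β := by
  induction h : hammingDist α β using Nat.strong_induction_on generalizing α with
  | _ n ih =>
  rcases eq_or_ne α β with rfl | hne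
  · simp
  obtain ⟨i, hi⟩ := Function.ne_iff.1 hne
  set γ := update α i (β i)
  have hγ : hammingDist γ β < n := h ▸ hammingDist_update_lt hi
  calc hammingDist (y α) (y β) ≤ hammingDist (y α) (y γ) + hammingDist (y γ) (y β) :=
        hammingDist_triangle _ _ _
    _ ≤ 1 + hammingDist γ β :=
        add_le_add ((hy α γ).2 (hammingDist_update_self hi)).le (ih _ hγ γ rfl)
    _ ≤ n := by omega

lemma hammingDist_apply_of_mem_autH {y : Perm (I → Fin q)} (hy : y ∈ autH I q)
    (α β : I → Fin q) : hammingDist (y α) (y β) = hammingDist α β := by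
  refine (hammingDist_apply_le_of_mem_autH hy α β).antisymm ?_
  simpa using hammingDist_apply_le_of_mem_autH (inv_mem hy) (y α) (y β)

end Automorphisms

section Binary

variable {I : Type*} [Fintype I] [DecidableEq I]

lemma hammingNorm_eq_one_iff {α : I → Fin 2} : hammingNorm α = 1 ↔ ∃ i, α = Pi.single i 1 := by
  constructor
  · intro h
    obtain ⟨i, hi⟩ := card_eq_one.1 h
    have hmem : ∀ j, α j ≠ 0 ↔ j = i := fun j => by simpa using congrArg (j ∈ ·) hi
    refine ⟨i, funext fun j => ?_⟩
    by_cases hj : j = i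
    · subst hj
      have := (hmem j).2 rfl
      simp only [Pi.single_eq_same]
      omega
    · simp [hj, not_not.1 ((not_congr (hmem j)).2 hj)]
  · rintro ⟨i, rfl⟩
    exact card_eq_one.2 ⟨i, by ext j; by_cases hj : j = i <;> simp [hj]⟩

lemma hammingDist_single_one_lt_hammingNorm_iff {α : I → Fin 2} {i : I} :
    hammingDist α (Pi.single i 1) < hammingNorm α ↔ α i ≠ 0 := by
  have hsub : -Pi.single i 1 + α = update α i (α i - 1) := by
    funext j
    by_cases hj : j = i <;> simp [hj, sub_eq_neg_add]
  have := hammingNorm_update_add α i (α i - 1)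
  rw [hammingDist_comm, hammingDist_eq_hammingNorm, hsub]
  rcases (by omega : α i = 0 ∨ α i = 1) with h | h
  · simp_all
  · simp_all
    omega

lemma exists_eq_tvp_one_of_mem_autH {z : Perm (I → Fin 2)} (hz : z ∈ autH I 2) (h0 : z 0 = 0) :
    ∃ σ : Perm I, z = tvp (fun _ => 1) σ := by
  have hd := hammingDist_apply_of_mem_autH hz
  have hnorm : ∀ α, hammingNorm (z α) = hammingNorm α := fun α => by
    rw [← hammingDist_zero_right, ← h0, hd, hammingDist_zero_right]
  have hsingle : ∀ i, ∃ j, z (Pi.single i 1) = Pi.single j 1 := fun i =>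
    hammingNorm_eq_one_iff.1 ((hnorm _).trans (hammingNorm_eq_one_iff.2 ⟨i, rfl⟩))
  choose f hf using hsingle
  have hf_inj : Injective f := fun i j hij => by
    have := congrFun (z.injective ((hf i).trans (hij ▸ (hf j).symm))) i
    by_contra hne
    simp [hne] at this
  refine ⟨Equiv.ofBijective f hf_inj.bijective_of_finite, Equiv.ext fun α => funext fun j => ?_⟩
  obtain ⟨i, rfl⟩ := (Equiv.ofBijective f hf_inj.bijective_of_finite).surjective j
  have key : z α (f i) ≠ 0 ↔ α i ≠ 0 := by
    rw [← hammingDist_single_one_lt_hammingNorm_iff, ← hammingDist_single_one_lt_hammingNorm_iff,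
      ← hf, hd, hnorm]
  simpa [tvp] using fin_two_eq_of_ne_zero_iff key

theorem exists_eq_tvp_of_mem_autH {y : Perm (I → Fin 2)} (hy : y ∈ autH I 2) :
    ∃ (g : I → Perm (Fin 2)) (σ : Perm I), y = tvp g σ := by
  set t := tvp (fun i => swap 0 (y 0 i)) 1
  have ht : t 0 = y 0 := funext fun i => by simp [t, tvp]
  obtain ⟨σ, hσ⟩ := exists_eq_tvp_one_of_mem_autH (mul_mem (inv_mem (tvp_mem_autH _ _)) hy)
    (by rw [Perm.mul_apply, ← ht]; exact t.symm_apply_apply 0)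
  exact ⟨_, _, by rw [← mul_inv_cancel_left t y, hσ, tvp_mul_tvp]⟩

end Binary

section BinaryWeights

variable {I : Type*} [Fintype I]

lemma hammingNorm_tvp (g : I → Perm (Fin 2)) (σ : Perm I) (α : I → Fin 2) :
    hammingNorm (tvp g σ α) = hammingNorm fun i => g i (α i) :=
  hammingNorm_comp_perm σ⁻¹ fun i => g i (α i)

lemma hammingNorm_tvp_swap_add (σ : Perm I) (α : I → Fin 2) :
    hammingNorm (tvp (fun _ => swap 0 1) σ α) + hammingNorm α = Fintype.card I := by
  have hswap : ∀ a : Fin 2, swap 0 1 a ≠ 0 ↔ ¬a ≠ 0 := by decide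
  have := card_filter_add_card_filter_not (s := univ) fun i => α i ≠ 0
  rw [hammingNorm_tvp]
  simp only [hammingNorm, hswap, card_univ] at this ⊢
  omega

variable [DecidableEq I]

lemma hammingNorm_apply_of_mem_diagL {x : Perm (I → Fin 2)} (hx : x ∈ diagL I 2)
    (α : I → Fin 2) :
    hammingNorm (x α) = hammingNorm α ∨ hammingNorm (x α) + hammingNorm α = Fintype.card I := by
  obtain ⟨⟨g, σ⟩, rfl⟩ := hx
  rcases perm_fin_two g with rfl | rfl
  · exact Or.inl (hammingNorm_tvp (fun _ => 1) σ α)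
  · exact Or.inr (hammingNorm_tvp_swap_add σ α)

lemma hammingNorm_indicator (s : Finset I) :
    hammingNorm (fun i => if i ∈ s then (1 : Fin 2) else 0) = #s := by
  simp [hammingNorm]

lemma exists_hammingNorm_eq {w : ℕ} (hw : w ≤ Fintype.card I) :
    ∃ α : I → Fin 2, hammingNorm α = w := by
  obtain ⟨s, -, hs⟩ := exists_subset_card_eq (s := (univ : Finset I)) (by simpa using hw)
  exact ⟨_, (hammingNorm_indicator s).trans hs⟩

lemma exists_tvp_one_apply_eq {α β : I → Fin 2} (h : hammingNorm α = hammingNorm β) :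
    ∃ σ : Perm I, tvp (fun _ => 1) σ α = β := by
  obtain ⟨σ, hσ⟩ := (Set.powersetCard.isPretransitive (α := I) (n := hammingNorm β)).exists_smul_eq
    ⟨univ.filter fun i => α i ≠ 0, h⟩ ⟨univ.filter fun i => β i ≠ 0, rfl⟩
  replace hσ := congrArg Subtype.val hσ
  rw [Set.powersetCard.coe_smul] at hσ
  refine ⟨σ, funext fun i => fin_two_eq_of_ne_zero_iff ?_⟩
  have := Finset.inv_smul_mem_iff (a := σ) (b := i) (s := univ.filter fun i => α i ≠ 0)
  rw [hσ] at this
  simpa [tvp] using this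

theorem isOrbitOf_diagL_hammingNorm {w : ℕ} (hw : w ≤ Fintype.card I) :
    IsOrbitOf (diagL I 2)
      {α : I → Fin 2 | hammingNorm α = w ∨ hammingNorm α + w = Fintype.card I} := by
  obtain ⟨α₀, hα₀⟩ := exists_hammingNorm_eq hw
  refine ⟨α₀, Set.ext fun α => ⟨?_, ?_⟩⟩
  · rintro (h | h)
    · obtain ⟨σ, hσ⟩ := exists_tvp_one_apply_eq (hα₀.trans h.symm)
      exact ⟨_, ⟨(1, σ), rfl⟩, hσ⟩
    · set c : Perm (I → Fin 2) := tvp (fun _ => swap 0 1) 1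
      have hc : c ∈ diagL I 2 := ⟨(swap 0 1, 1), rfl⟩
      have hcα : hammingNorm (c α) + hammingNorm α = _ := hammingNorm_tvp_swap_add 1 α
      obtain ⟨σ, hσ⟩ := exists_tvp_one_apply_eq (α := α₀) (β := c α) (by omega)
      refine ⟨c⁻¹ * diagLHom I 2 (1, σ), mul_mem (inv_mem hc) ⟨_, rfl⟩, ?_⟩
      rw [Perm.mul_apply]
      exact (congrArg (⇑c⁻¹) hσ).trans (c.symm_apply_apply α)
  · rintro ⟨x, hx, rfl⟩
    simpa [hα₀] using hammingNorm_apply_of_mem_diagL hx α₀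

end BinaryWeights

section Distance

variable {I : Type*} [Fintype I] {q : ℕ}

lemma distC_eq_one_iff {γ : I → Fin q} {C : Set (I → Fin q)} :
    distC γ C = 1 ↔ γ ∉ C ∧ ∃ β ∈ C, hammingDist γ β = 1 := by
  simp only [distC, Nat.sInf_eq_one_iff, Set.mem_ofPred_eq, hammingDist_eq_zero, exists_eq_right']
  tauto

lemma minDist_eq_one {C : Set (I → Fin q)} {β γ : I → Fin q} (hβ : β ∈ C) (hγ : γ ∈ C)
    (h : hammingDist β γ = 1) : minDist C = 1 :=
  Nat.sInf_eq_one_iff.2 ⟨⟨β, hβ, γ, hγ, fun hβγ => by simp [hβγ] at h, h⟩,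
    fun ⟨_, _, _, _, hne, h0⟩ => hne (hammingDist_eq_zero.1 h0)⟩

end Distance

section BinaryNeighbours

variable {I : Type*} [Fintype I] [DecidableEq I]

lemma hammingNorm_eq_or_of_hammingDist_eq_one {α β : I → Fin 2} (h : hammingDist α β = 1) :
    hammingNorm β = hammingNorm α + 1 ∨ hammingNorm α = hammingNorm β + 1 := by
  obtain ⟨i, hne, hβ⟩ := exists_eq_update_of_hammingDist_eq_one h
  have := hammingNorm_update_add α i (β i)
  rw [← hβ] at this
  rcases (by omega : α i = 0 ∨ α i = 1) with hα | hα <;>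
    rcases (by omega : β i = 0 ∨ β i = 1) with hβ | hβ <;> simp [hα, hβ] at this hne <;> omega

lemma exists_hammingDist_eq_one_hammingNorm_succ {α : I → Fin 2}
    (h : hammingNorm α < Fintype.card I) :
    ∃ β, hammingDist α β = 1 ∧ hammingNorm β = hammingNorm α + 1 := by
  obtain ⟨i, hi⟩ : ∃ i, α i = 0 := by
    by_contra! h'
    simp [hammingNorm, h'] at h
  refine ⟨update α i 1, hammingDist_update_self (by simp [hi]), ?_⟩
  simpa [hi] using hammingNorm_update_add α i 1

lemma exists_hammingDist_eq_one_hammingNorm_pred {α : I → Fin 2} (h : 0 < hammingNorm α) :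
    ∃ β, hammingDist α β = 1 ∧ hammingNorm β + 1 = hammingNorm α := by
  obtain ⟨i, hi⟩ : ∃ i, α i ≠ 0 := Function.ne_iff.1 (hammingNorm_pos_iff.1 h)
  refine ⟨update α i 0, hammingDist_update_self hi, ?_⟩
  simpa [hi] using hammingNorm_update_add α i 0

end BinaryNeighbours

section NonconstantLetterMaps

variable {I : Type*} [Fintype I] [DecidableEq I]

lemma exists_hammingNorm_eq_apply_eq {a b : I} (hab : a ≠ b) {k : ℕ} (hk : 1 ≤ k)
    (hk' : k < Fintype.card I) : ∃ α : I → Fin 2, hammingNorm α = k ∧ α a = 0 ∧ α b = 1 := by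
  obtain ⟨s, hbs, hs, hcard⟩ := exists_subsuperset_card_eq (s := {b}) (t := univ.erase a) (n := k)
    (by simpa using hab.symm) (by simpa using hk)
    (by rw [card_erase_of_mem (mem_univ a), card_univ]; omega)
  refine ⟨_, (hammingNorm_indicator s).trans hcard, ?_, ?_⟩
  · simpa using fun h => (mem_erase.1 (hs h)).1 rfl
  · simp [singleton_subset_iff.1 hbs]

lemma exists_hammingNorm_tvp_add_two (g : I → Perm (Fin 2)) (σ : Perm I) {a b : I} (hab : a ≠ b)
    (ha : g a = 1) (hb : g b = swap 0 1) {k : ℕ} (hk : 1 ≤ k) (hk' : k < Fintype.card I) :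
    ∃ α α' : I → Fin 2, hammingNorm α = k ∧ hammingNorm α' = k ∧
      hammingNorm (tvp g σ α') = hammingNorm (tvp g σ α) + 2 := by
  obtain ⟨α, hα, ha0, hb1⟩ := exists_hammingNorm_eq_apply_eq hab hk hk'
  have h₁ := hammingNorm_update_add α a 1
  have h₂ := hammingNorm_update_add (update α a 1) b 0
  have h₃ := hammingNorm_update_add (fun i => g i (α i)) a 1
  have h₄ := hammingNorm_update_add (update (fun i => g i (α i)) a 1) b 1
  have hg : (fun i => g i (update (update α a 1) b 0 i)) =
      update (update (fun i => g i (α i)) a 1) b 1 := by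
    funext i
    by_cases hib : i = b
    · subst hib; simp [hb]
    · by_cases hia : i = a
      · subst hia; simp [ha, hib]
      · simp [hia, hib]
  refine ⟨α, update (update α a 1) b 0, hα, ?_, ?_⟩
  · simp [ha0, hb1, hab.symm] at h₁ h₂
    omega
  · rw [hammingNorm_tvp, hammingNorm_tvp, hg]
    simp [ha0, hb1, ha, hb, hab.symm] at h₃ h₄
    omega

end NonconstantLetterMaps

section WCode

variable {r : ℕ}

lemma mem_wCode_iff {α : Fin (2 * r + 1) → Fin 2} :
    α ∈ wCode (2 * r + 1) ↔ hammingNorm α = r ∨ hammingNorm α = r + 1 := by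
  change hammingNorm α = (2 * r + 1 + 1) / 2 ∨ hammingNorm α = (2 * r + 1 - 1) / 2 ↔ _
  omega

lemma wCode_eq :
    wCode (2 * r + 1) = {α | hammingNorm α = r + 1 ∨
      hammingNorm α + (r + 1) = Fintype.card (Fin (2 * r + 1))} := by
  ext α
  rw [mem_wCode_iff, Set.mem_ofPred_eq, Fintype.card_fin]
  omega

lemma cell_wCode_one (hr : 1 ≤ r) :
    cell (wCode (2 * r + 1)) 1 = {α | hammingNorm α = r + 2 ∨
      hammingNorm α + (r + 2) = Fintype.card (Fin (2 * r + 1))} := by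
  ext γ
  simp only [cell, Set.mem_ofPred_eq, distC_eq_one_iff, mem_wCode_iff, Fintype.card_fin]
  constructor
  · rintro ⟨hγ, β, hβ, hd⟩
    have := hammingNorm_eq_or_of_hammingDist_eq_one hd
    omega
  · rintro (h | h)
    · obtain ⟨β, hd, hβ⟩ := exists_hammingDist_eq_one_hammingNorm_pred (α := γ) (by omega)
      exact ⟨by omega, β, by omega, hd⟩
    · obtain ⟨β, hd, hβ⟩ := exists_hammingDist_eq_one_hammingNorm_succ (α := γ)
        (by rw [Fintype.card_fin]; omega)
      exact ⟨by omega, β, by omega, hd⟩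

theorem minDist_wCode (r : ℕ) : minDist (wCode (2 * r + 1)) = 1 := by
  obtain ⟨α, hα⟩ := exists_hammingNorm_eq (I := Fin (2 * r + 1)) (w := r + 1)
    (by rw [Fintype.card_fin]; omega)
  obtain ⟨β, hd, hβ⟩ := exists_hammingDist_eq_one_hammingNorm_pred (α := α) (by omega)
  exact minDist_eq_one (mem_wCode_iff.2 (Or.inr hα)) (mem_wCode_iff.2 (by omega)) hd

lemma apply_mem_wCode_iff {x : Perm (Fin (2 * r + 1) → Fin 2)} (hx : x ∈ diagL _ 2)
    {α : Fin (2 * r + 1) → Fin 2} : x α ∈ wCode (2 * r + 1) ↔ α ∈ wCode (2 * r + 1) := by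
  have := hammingNorm_apply_of_mem_diagL hx α
  rw [mem_wCode_iff, mem_wCode_iff]
  rw [Fintype.card_fin] at this
  omega

lemma diagL_le_stabilizer_wCode :
    diagL (Fin (2 * r + 1)) 2 ≤ MulAction.stabilizer _ (wCode (2 * r + 1)) := fun x hx =>
  Set.ext fun β => by
    rw [Set.mem_smul_set_iff_inv_smul_mem, Perm.smul_def, ← apply_mem_wCode_iff hx]
    simp

lemma mem_diagL_of_mapsTo_wCode (hr : 1 ≤ r) {y : Perm (Fin (2 * r + 1) → Fin 2)}
    (hy : y ∈ autH _ 2) (hC : Set.MapsTo y (wCode (2 * r + 1)) (wCode (2 * r + 1))) :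
    y ∈ diagL _ 2 := by
  obtain ⟨g, σ, rfl⟩ := exists_eq_tvp_of_mem_autH hy
  suffices hg : ∀ i, g i = g 0 by
    rw [funext hg]
    exact ⟨(g 0, σ), rfl⟩
  by_contra! ⟨i, hi⟩
  obtain ⟨a, b, hab, ha, hb⟩ : ∃ a b, a ≠ b ∧ g a = 1 ∧ g b = swap 0 1 := by
    rcases perm_fin_two (g i) with h | h <;> rcases perm_fin_two (g 0) with h' | h'
    · exact absurd (h.trans h'.symm) hi
    · exact ⟨i, 0, fun e => hi (e ▸ rfl), h, h'⟩
    · exact ⟨0, i, fun e => hi (e ▸ rfl), h', h⟩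
    · exact absurd (h.trans h'.symm) hi
  obtain ⟨α, α', hα, hα', hnorm⟩ := exists_hammingNorm_tvp_add_two g σ hab ha hb (k := r + 1)
    (by omega) (by rw [Fintype.card_fin]; omega)
  have h₁ := mem_wCode_iff.1 (hC (mem_wCode_iff.2 (Or.inr hα)))
  have h₂ := mem_wCode_iff.1 (hC (mem_wCode_iff.2 (Or.inr hα')))
  omega

theorem autCode_wCode (hr : 1 ≤ r) : autCode (wCode (2 * r + 1)) = diagL _ 2 := by
  refine le_antisymm (fun y hy => ?_) (le_inf diagL_le_autH diagL_le_stabilizer_wCode)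
  obtain ⟨hy, hst⟩ := Subgroup.mem_inf.1 hy
  refine mem_diagL_of_mapsTo_wCode hr hy fun α hα => ?_
  rw [← MulAction.mem_stabilizer_iff.1 hst]
  exact Set.smul_mem_smul_set hα

end WCode

/-- Theorem 3.3(iii): for odd `m ≥ 3`, the code `W([m/2],2)` of binary
`m`-tuples of weight `(m±1)/2` is neighbour transitive, `Aut(W([m/2],2)) = Diag_m(S_2) ⋊ L`,
and its minimum distance is `1`. -/
theorem wCode_neighbour_transitive (m : ℕ) (hm : 3 ≤ m) (hodd : Odd m) :
    (∃ X : Subgroup (Equiv.Perm (Fin m → Fin 2)), NbrTransitive X (wCode m)) ∧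
    autCode (wCode m) = diagL (Fin m) 2 ∧
    minDist (wCode m) = 1 := by
  obtain ⟨r, rfl⟩ := hodd
  have hr : 1 ≤ r := by omega
  refine ⟨⟨diagL _ 2, diagL_le_autH, ?_, ?_⟩, autCode_wCode hr, minDist_wCode r⟩
  · rw [wCode_eq]
    exact isOrbitOf_diagL_hammingNorm (by rw [Fintype.card_fin]; omega)
  · rw [cell_wCode_one hr]
    exact isOrbitOf_diagL_hammingNorm (by rw [Fintype.card_fin]; omega)
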